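/- arXiv:2512.05962 — 2 statements merged into one kernel-verified Lean document; each statement's English description precedes it below -/
import Mathlib

section
/- Let Y be a countable type, let π_base be a probability mass function on Y, let r : Y → {0,1}, and set Z := ∑_y π_base(y)·r(y); assume 0 < Z ≤ 1. Define p(y) := π_base(y)·r(y)/Z, and for every β > 0 define Z_β := ∑_y π_base(y)·exp(r(y)/β) and p_β(y) := π_base(y)·exp(r(y)/β)/Z_β. Then the total variation distance ‖p_β − p‖_TV := (1/2)·∑_y |p_β(y) − p(y)| converges to 0 as β tends to 0 from the right. -/
/-!
With `e = exp (1 / β)`, an indicator reward gives `exp (r y / β) = 1 + r y * (e - 1)`, so the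
partition function is `Z_β = 1 + Z * (e - 1)`. Comparing `p_β` and `p` case by case on `r y`
bounds each term of the total variation by `pbase y / (Z * Z_β)`, and `Z_β → ∞` as `β → 0⁺`.
-/

open Filter Topology

lemma Real.exp_div_of_eq_zero_or_eq_one {ρ : ℝ} (hρ : ρ = 0 ∨ ρ = 1) (β : ℝ) :
    Real.exp (ρ / β) = 1 + ρ * (Real.exp (1 / β) - 1) := by
  rcases hρ with rfl | rfl <;> simp

lemma tsum_mul_exp_div_of_eq_zero_or_eq_one {Y : Type*} {w r : Y → ℝ} (hw : Summable w)
    (hr : ∀ y, r y = 0 ∨ r y = 1) (β : ℝ) :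
    ∑' y, w y * Real.exp (r y / β) =
      ∑' y, w y + (∑' y, w y * r y) * (Real.exp (1 / β) - 1) := by
  have hwr : Summable fun y => w y * r y :=
    Summable.of_norm_bounded hw.abs fun y => by
      rcases hr y with h | h <;> simp [h]
  simp_rw [Real.exp_div_of_eq_zero_or_eq_one (hr _), mul_add, mul_one, ← mul_assoc]
  rw [hw.tsum_add (hwr.mul_right _), tsum_mul_right]

lemma abs_mul_one_add_div_sub_mul_div_le {a ρ Z e : ℝ} (ha : 0 ≤ a) (hρ : ρ = 0 ∨ ρ = 1)
    (hZ : 0 < Z) (hZ1 : Z ≤ 1) (he : 1 ≤ e) :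
    |a * (1 + ρ * (e - 1)) / (1 + Z * (e - 1)) - a * ρ / Z| ≤ a * (Z * (1 + Z * (e - 1)))⁻¹ := by
  have hW : 0 < 1 + Z * (e - 1) := by nlinarith
  rcases hρ with rfl | rfl
  · rw [zero_mul, add_zero, mul_one, mul_zero, zero_div, sub_zero, abs_of_nonneg (by positivity),
      div_eq_mul_inv]
    gcongr
    nlinarith
  · have hdiff : a * (1 + 1 * (e - 1)) / (1 + Z * (e - 1)) - a * 1 / Z =
        -(a * (1 - Z) * (Z * (1 + Z * (e - 1)))⁻¹) := by
      rw [div_sub_div _ _ hW.ne' hZ.ne']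
      field_simp
      ring
    rw [hdiff, abs_neg, abs_of_nonneg (by have := sub_nonneg.2 hZ1; positivity)]
    gcongr
    nlinarith

lemma tsum_abs_le_of_abs_le_mul {Y : Type*} {f w : Y → ℝ} (hw : Summable w)
    (hw1 : ∑' y, w y = 1) {c : ℝ} (h : ∀ y, |f y| ≤ w y * c) : ∑' y, |f y| ≤ c := by
  have hwc : Summable fun y => w y * c := hw.mul_right c
  calc ∑' y, |f y| ≤ ∑' y, w y * c :=
        (hwc.of_nonneg_of_le (fun y => abs_nonneg _) h).tsum_le_tsum h hwc
    _ = c := by rw [tsum_mul_right, hw1, one_mul]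

lemma tendsto_one_add_mul_exp_inv_sub_one_atTop {Z : ℝ} (hZ : 0 < Z) :
    Tendsto (fun β => 1 + Z * (Real.exp (1 / β) - 1)) (𝓝[>] 0) atTop := by
  have hinv : Tendsto (fun β : ℝ => 1 / β) (𝓝[>] 0) atTop := by
    simpa only [one_div] using tendsto_inv_nhdsGT_zero (𝕜 := ℝ)
  refine tendsto_atTop_add_const_left _ _ (Tendsto.const_mul_atTop hZ ?_)
  exact tendsto_atTop_add_const_right _ _ (Real.tendsto_exp_atTop.comp hinv)

theorem stmt_2_general {Y : Type*}
    (pbase : Y → ℝ) (hnn : ∀ y, 0 ≤ pbase y) (hsum : ∑' y, pbase y = 1)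
    (r : Y → ℝ) (hr : ∀ y, r y = 0 ∨ r y = 1)
    (Z : ℝ) (hZ : Z = ∑' y, pbase y * r y) (hZpos : 0 < Z) (hZle : Z ≤ 1)
    (p : Y → ℝ) (hp : ∀ y, p y = pbase y * r y / Z)
    (pβ : ℝ → Y → ℝ)
    (hpβ : ∀ β, 0 < β → ∀ y,
      pβ β y = pbase y * Real.exp (r y / β) / (∑' y', pbase y' * Real.exp (r y' / β))) :
    Tendsto (fun β => (1 / 2) * ∑' y, |pβ β y - p y|) (𝓝[>] (0 : ℝ)) (𝓝 0) := by
  have hsumm : Summable pbase := by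
    by_contra h
    simp [tsum_eq_zero_of_not_summable h] at hsum
  set W : ℝ → ℝ := fun β => 1 + Z * (Real.exp (1 / β) - 1)
  have hbound : ∀ β > 0, ∑' y, |pβ β y - p y| ≤ (Z * W β)⁻¹ := fun β hβ =>
    tsum_abs_le_of_abs_le_mul hsumm hsum fun y => by
      rw [hpβ β hβ y, hp y, tsum_mul_exp_div_of_eq_zero_or_eq_one hsumm hr, hsum, ← hZ,
        Real.exp_div_of_eq_zero_or_eq_one (hr y)]
      exact abs_mul_one_add_div_sub_mul_div_le (hnn y) (hr y) hZpos hZle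
        (Real.one_le_exp (by positivity))
  have hlim : Tendsto (fun β => (1 / 2) * (Z * W β)⁻¹) (𝓝[>] 0) (𝓝 0) := by
    simpa only [mul_zero, Pi.inv_apply] using
      ((tendsto_one_add_mul_exp_inv_sub_one_atTop hZpos).const_mul_atTop
        hZpos).inv_tendsto_atTop.const_mul (1 / 2 : ℝ)
  refine tendsto_of_tendsto_of_tendsto_of_le_of_le' tendsto_const_nhds hlim ?_ ?_
  · exact Eventually.of_forall fun β => by positivity
  · filter_upwards [self_mem_nhdsWithin] with β hβ
    gcongr
    exact hbound β hβ

/-- The total variation distance between the Gibbs distribution `p_β`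
and the filtered distribution `p` converges to `0` as `β → 0⁺`. -/
theorem stmt_2 {Y : Type*} [Countable Y]
    (pbase : Y → ℝ) (hnn : ∀ y, 0 ≤ pbase y) (hsum : ∑' y, pbase y = 1)
    (r : Y → ℝ) (hr : ∀ y, r y = 0 ∨ r y = 1)
    (Z : ℝ) (hZ : Z = ∑' y, pbase y * r y) (hZpos : 0 < Z) (hZle : Z ≤ 1)
    (p : Y → ℝ) (hp : ∀ y, p y = pbase y * r y / Z)
    (pβ : ℝ → Y → ℝ)
    (hpβ : ∀ β, 0 < β → ∀ y,
      pβ β y = pbase y * Real.exp (r y / β) / (∑' y', pbase y' * Real.exp (r y' / β))) :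
    Tendsto (fun β => (1 / 2) * ∑' y, |pβ β y - p y|) (𝓝[>] (0 : ℝ)) (𝓝 0) :=
  stmt_2_general pbase hnn hsum r hr Z hZ hZpos hZle p hp pβ hpβ
end

section
/- Let Y be a countable type, let π_base be a probability mass function on Y, let r : Y → {0,1}, and set Z := ∑_y π_base(y)·r(y); assume 0 < Z ≤ 1. Define p(y) := π_base(y)·r(y)/Z, and for β > 0 define Z_β := ∑_y π_base(y)·exp(r(y)/β) and p_β(y) := π_base(y)·exp(r(y)/β)/Z_β. Then for every β > 0, setting ε := exp(−1/β)·(1 − Z), the total variation distance satisfies the exact identity (1/2)·∑_y |p_β(y) − p(y)| = ε/(Z + ε) = exp(−1/β)·(1 − Z)/(Z + exp(−1/β)·(1 − Z)). -/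
/-!
For `r ∈ {0, 1}` we have `exp (r / β) = 1 + (c - 1) r` with `c = exp (1 / β)`, so `p_β` is the base
distribution tilted by the factor `c` on the event `{r = 1}`, with normaliser `Z_β = 1 + (c - 1) Z`.
Off the event `p_β - p = π_base / Z_β ≥ 0`, while on it `p_β - p = -π_base (1 - Z) / (Z Z_β) ≤ 0`;
each part has total mass `(1 - Z) / Z_β`, so the total variation distance is `(1 - Z) / Z_β`, which
is `ε / (Z + ε)` after multiplying numerator and denominator by `exp (-1 / β)`.
-/

open Real

lemma summable_of_tsum_ne_zero {Y M : Type*} [AddCommMonoid M] [TopologicalSpace M] {f : Y → M}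
    (h : ∑' y, f y ≠ 0) : Summable f := by
  by_contra hf
  exact h (tsum_eq_zero_of_not_summable hf)

lemma exp_div_eq_one_add_mul_of_eq_zero_or_eq_one {t : ℝ} (ht : t = 0 ∨ t = 1) (β : ℝ) :
    exp (t / β) = 1 + (exp (1 / β) - 1) * t := by
  rcases ht with rfl | rfl <;> simp

lemma abs_tilt_sub_cond_of_eq_zero_or_eq_one {a t Z c : ℝ} (ha : 0 ≤ a) (ht : t = 0 ∨ t = 1)
    (hZ : 0 < Z) (hZ1 : Z ≤ 1) (hc : 0 < c) :
    |a * (1 + (c - 1) * t) / (1 + (c - 1) * Z) - a * t / Z|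
      = ((1 - Z) / Z * (a * t) + (a - a * t)) / (1 + (c - 1) * Z) := by
  have hZc : 0 < 1 + (c - 1) * Z := by nlinarith
  rcases ht with rfl | rfl
  · simp only [mul_zero, add_zero, mul_one, zero_div, sub_zero, zero_add]
    exact abs_of_nonneg (div_nonneg ha hZc.le)
  · have hneg : a * (1 + (c - 1) * 1) / (1 + (c - 1) * Z) - a * 1 / Z
        = -((1 - Z) / Z * (a * 1) / (1 + (c - 1) * Z)) := by
      field_simp
      ring
    have h1Z : 0 ≤ 1 - Z := by linarith
    rw [hneg, abs_neg, abs_of_nonneg (by positivity)]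
    ring

section TiltedIndicator

variable {Y : Type*} {μ r : Y → ℝ}

lemma summable_mul_of_eq_zero_or_eq_one (hμ : ∀ y, 0 ≤ μ y) (hμs : Summable μ)
    (hr : ∀ y, r y = 0 ∨ r y = 1) : Summable fun y => μ y * r y :=
  hμs.of_nonneg_of_le (fun y => by rcases hr y with h | h <;> simp [h, hμ y])
    (fun y => by rcases hr y with h | h <;> simp [h, hμ y])

/-- Total variation (times two) between `μ` tilted by the factor `c` on `{r = 1}` and `μ`
conditioned on `{r = 1}`. -/
lemma tsum_abs_tilt_sub_cond (hμ : ∀ y, 0 ≤ μ y) (hμ1 : ∑' y, μ y = 1)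
    (hr : ∀ y, r y = 0 ∨ r y = 1) {Z : ℝ} (hZ : Z = ∑' y, μ y * r y) (hZpos : 0 < Z)
    (hZ1 : Z ≤ 1) {c : ℝ} (hc : 0 < c) :
    ∑' y, |μ y * (1 + (c - 1) * r y) / (1 + (c - 1) * Z) - μ y * r y / Z|
      = 2 * (1 - Z) / (1 + (c - 1) * Z) := by
  have hμs : Summable μ := summable_of_tsum_ne_zero (by simp [hμ1])
  have hμrs := summable_mul_of_eq_zero_or_eq_one hμ hμs hr
  simp_rw [abs_tilt_sub_cond_of_eq_zero_or_eq_one (hμ _) (hr _) hZpos hZ1 hc, div_eq_mul_inv _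
    (1 + (c - 1) * Z)]
  rw [tsum_mul_right, (hμrs.mul_left _).tsum_add (hμs.sub hμrs), tsum_mul_left,
    hμs.tsum_sub hμrs, hμ1, ← hZ]
  field_simp
  ring

end TiltedIndicator

theorem stmt_3_general {Y : Type*}
    (pbase : Y → ℝ) (hnn : ∀ y, 0 ≤ pbase y) (hsum : ∑' y, pbase y = 1)
    (r : Y → ℝ) (hr : ∀ y, r y = 0 ∨ r y = 1)
    (Z : ℝ) (hZ : Z = ∑' y, pbase y * r y) (hZpos : 0 < Z) (hZle : Z ≤ 1)
    (p : Y → ℝ) (hp : ∀ y, p y = pbase y * r y / Z)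
    (β : ℝ)
    (Zβ : ℝ) (hZβ : Zβ = ∑' y, pbase y * Real.exp (r y / β))
    (pβ : Y → ℝ) (hpβ : ∀ y, pβ y = pbase y * Real.exp (r y / β) / Zβ)
    (ε : ℝ) (hε : ε = Real.exp (-1 / β) * (1 - Z)) :
    (1 / 2) * ∑' y, |pβ y - p y| = ε / (Z + ε)
    ∧ (1 / 2) * ∑' y, |pβ y - p y|
        = Real.exp (-1 / β) * (1 - Z) / (Z + Real.exp (-1 / β) * (1 - Z)) := by
  set c := exp (1 / β)
  have htilt : ∀ y, exp (r y / β) = 1 + (c - 1) * r y :=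
    fun y => exp_div_eq_one_add_mul_of_eq_zero_or_eq_one (hr y) β
  have hZβc : Zβ = 1 + (c - 1) * Z := by
    have hμs : Summable pbase := summable_of_tsum_ne_zero (by simp [hsum])
    simp_rw [hZβ, htilt, mul_add, mul_one, mul_left_comm _ (c - 1)]
    rw [hμs.tsum_add ((summable_mul_of_eq_zero_or_eq_one hnn hμs hr).mul_left _), tsum_mul_left,
      hsum, hZ]
  have hTV : ∑' y, |pβ y - p y| = 2 * (1 - Z) / (1 + (c - 1) * Z) := by
    simp_rw [hpβ, hp, htilt, hZβc]
    exact tsum_abs_tilt_sub_cond hnn hsum hr hZ hZpos hZle (exp_pos _)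
  have hc : c = (exp (-1 / β))⁻¹ := by rw [← exp_neg, neg_div, neg_neg]
  have hmain : (1 / 2) * ∑' y, |pβ y - p y| = ε / (Z + ε) := by
    rw [hTV, hε, hc]
    field_simp
    ring
  exact ⟨hmain, hε ▸ hmain⟩

/-- Exact identity for the total variation distance between the Gibbs
distribution `p_β` and the filtered distribution `p`. -/
theorem stmt_3 {Y : Type*} [Countable Y]
    (pbase : Y → ℝ) (hnn : ∀ y, 0 ≤ pbase y) (hsum : ∑' y, pbase y = 1)
    (r : Y → ℝ) (hr : ∀ y, r y = 0 ∨ r y = 1)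
    (Z : ℝ) (hZ : Z = ∑' y, pbase y * r y) (hZpos : 0 < Z) (hZle : Z ≤ 1)
    (p : Y → ℝ) (hp : ∀ y, p y = pbase y * r y / Z)
    (β : ℝ) (hβ : 0 < β)
    (Zβ : ℝ) (hZβ : Zβ = ∑' y, pbase y * Real.exp (r y / β))
    (pβ : Y → ℝ) (hpβ : ∀ y, pβ y = pbase y * Real.exp (r y / β) / Zβ)
    (ε : ℝ) (hε : ε = Real.exp (-1 / β) * (1 - Z)) :
    (1 / 2) * ∑' y, |pβ y - p y| = ε / (Z + ε)
    ∧ (1 / 2) * ∑' y, |pβ y - p y|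
        = Real.exp (-1 / β) * (1 - Z) / (Z + Real.exp (-1 / β) * (1 - Z)) :=
  stmt_3_general pbase hnn hsum r hr Z hZ hZpos hZle p hp β Zβ hZβ pβ hpβ ε hε
end
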